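/- arXiv:1410.4085 — 3 statements merged into one kernel-verified Lean document; each statement's English description precedes it below -/
import Mathlib

section
/- For every k ≥ 0, the sum of s(n) over n ranging from 2^k + 1 to 2^{k+1} equals 3^k, where s is Stern's diatomic sequence. -/
/-- Stern's diatomic sequence. -/
def stern : ℕ → ℕ
  | 0 => 0
  | 1 => 1
  | n + 2 =>
      if (n + 2) % 2 = 0 then stern ((n + 2) / 2)
      else stern ((n + 2) / 2) + stern ((n + 2) / 2 + 1)
decreasing_by all_goals omega

/-- Shortest palindrome having `w` as a prefix (right palindromic closure). -/
def palClosure (w : List Bool) : List Bool :=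
  let d := Nat.find (p := fun d => (w.drop d).reverse = w.drop d)
    ⟨w.length, by simp⟩
  w ++ (w.take d).reverse

/-- Iterated palindromic closure (palindromization map ψ). -/
def psi (v : List Bool) : List Bool :=
  v.foldl (fun w x => palClosure (w ++ [x])) []

/-- Minimal period of a word (`1` for the empty word). -/
def minPeriod (w : List Bool) : ℕ :=
  Nat.find (p := fun p => 1 ≤ p ∧ ∀ i < w.length, i + p < w.length → w[i]? = w[i + p]?)
    ⟨w.length + 1, by omega, fun i _ h => absurd h (by omega)⟩

/-- The morphism μ_x on a single letter. -/
def muLetter (x y : Bool) : List Bool := if y = x then [x] else [x, y]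

/-- Action of μ_x on a word. -/
def muL (x : Bool) (w : List Bool) : List Bool := w.flatMap (muLetter x)

/-- μ_v = μ_{x₁} ∘ ⋯ ∘ μ_{xₙ} for v = x₁⋯xₙ. -/
def muWord (v : List Bool) (w : List Bool) : List Bool := v.foldr muL w

/-- Fibonacci numbers shifted: `fibD k = F_{k-1}` where F_{-1}=F_0=1. -/
def fibD : ℕ → ℕ
  | 0 => 1
  | 1 => 1
  | n + 2 => fibD (n + 1) + fibD n

/-- Head-recursion helper for continuants. -/
def khead : List ℤ → ℤ
  | [] => 1
  | [a] => a
  | a :: b :: t => a * khead (b :: t) + khead t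

/-- Continuant K[a₀,…,aₙ]: K[]=1, K[a₀]=a₀, K[a₀,…,aₙ]=aₙK[a₀,…,a_{n-1}]+K[a₀,…,a_{n-2}]. -/
def contK (l : List ℤ) : ℤ := khead l.reverse

/-- Value of a little-endian list of binary digits. -/
def ofBits (l : List Bool) : ℕ := l.foldr (fun b n => 2 * n + (if b then 1 else 0)) 0

/-- The integer obtained by reversing the binary expansion of `n`. -/
def binRev (n : ℕ) : ℕ := ofBits n.bits.reverse

/-- The word b(ab)^m over {a,b} ≃ {false,true}. -/
def altPat : ℕ → List Bool
  | 0 => [true]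
  | m + 1 => altPat m ++ [false, true]



lemma stern_two_mul : ∀ n, stern (2 * n) = stern n
  | 0 => rfl
  | n + 1 => by
      show stern (2 * n + 2) = stern (n + 1)
      rw [stern]
      have h1 : (2 * n + 2) % 2 = 0 := by omega
      have h2 : (2 * n + 2) / 2 = n + 1 := by omega
      simp [h1, h2]

lemma stern_two_mul_add_one : ∀ n, stern (2 * n + 1) = stern n + stern (n + 1)
  | 0 => by simp [stern]
  | n + 1 => by
      show stern (2 * n + 3) = stern (n + 1) + stern (n + 2)
      rw [show 2 * n + 3 = (2 * n + 1) + 2 from rfl, stern]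
      have h1 : (2 * n + 1 + 2) % 2 = 1 := by omega
      have h2 : (2 * n + 1 + 2) / 2 = n + 1 := by omega
      simp [h1, h2]

lemma stern_pow_two : ∀ k, stern (2 ^ k) = 1
  | 0 => by simp [stern]
  | k + 1 => by rw [pow_succ, mul_comm, stern_two_mul, stern_pow_two k]

lemma sum_Ico_double (g : ℕ → ℕ) (a : ℕ) : ∀ b, a ≤ b →
    ∑ n ∈ Finset.Ico (2 * a) (2 * b), g n
      = ∑ m ∈ Finset.Ico a b, (g (2 * m) + g (2 * m + 1))
  | b, h => by
      rcases Nat.eq_or_lt_of_le h with rfl | hlt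
      · simp
      · obtain ⟨c, rfl⟩ : ∃ c, b = c + 1 := ⟨b - 1, by omega⟩
        have hc : a ≤ c := by omega
        rw [Finset.sum_Ico_succ_top hc,
          show 2 * (c + 1) = (2 * c + 1) + 1 from by ring,
          Finset.sum_Ico_succ_top (by omega), Finset.sum_Ico_succ_top (by omega),
          sum_Ico_double g a c hc]
        ring

lemma stern_sum_shift (a b : ℕ) (hab : a ≤ b) (ha : stern a = 1) (hb : stern b = 1) :
    ∑ n ∈ Finset.Ico (a + 1) (b + 1), stern n = ∑ n ∈ Finset.Ico a b, stern n := by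
  have h1 : ∑ n ∈ Finset.Ico a (b + 1), stern n
      = stern a + ∑ n ∈ Finset.Ico (a + 1) (b + 1), stern n :=
    Finset.sum_eq_sum_Ico_succ_bot (by omega) _
  have h2 : ∑ n ∈ Finset.Ico a (b + 1), stern n
      = (∑ n ∈ Finset.Ico a b, stern n) + stern b :=
    Finset.sum_Ico_succ_top hab _
  omega

lemma stern_row_sum_Ico : ∀ k,
    ∑ n ∈ Finset.Ico (2 ^ k) (2 ^ (k + 1)), stern n = 3 ^ k
  | 0 => by simp [stern]
  | k + 1 => by
      have hle : (2 : ℕ) ^ k ≤ 2 ^ (k + 1) := by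
        exact Nat.pow_le_pow_right (by norm_num) (by omega)
      rw [show (2 : ℕ) ^ (k + 1) = 2 * 2 ^ k from by ring,
        show (2 : ℕ) ^ (k + 2) = 2 * 2 ^ (k + 1) from by ring,
        sum_Ico_double _ _ _ hle]
      have key : ∀ m, stern (2 * m) + stern (2 * m + 1)
          = 2 * stern m + stern (m + 1) := by
        intro m; rw [stern_two_mul, stern_two_mul_add_one]; ring
      simp only [key]
      rw [Finset.sum_add_distrib, ← Finset.mul_sum, stern_row_sum_Ico k]
      have hshift : ∑ m ∈ Finset.Ico (2 ^ k) (2 ^ (k + 1)), stern (m + 1)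
          = ∑ m ∈ Finset.Ico (2 ^ k + 1) (2 ^ (k + 1) + 1), stern m := by
        rw [Finset.sum_Ico_eq_sum_range, Finset.sum_Ico_eq_sum_range]
        apply Finset.sum_congr (by congr 1; omega)
        intro i _; congr 1; omega
      rw [hshift, stern_sum_shift _ _ hle (stern_pow_two k) (stern_pow_two (k + 1)),
        stern_row_sum_Ico k]
      ring

theorem stern_row_sum (k : ℕ) :
    ∑ n ∈ Finset.Icc (2 ^ k + 1) (2 ^ (k + 1)), stern n = 3 ^ k := by
  have hle : (2 : ℕ) ^ k ≤ 2 ^ (k + 1) := Nat.pow_le_pow_right (by norm_num) (by omega)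
  have h : Finset.Icc (2 ^ k + 1) (2 ^ (k + 1)) = Finset.Ico (2 ^ k + 1) (2 ^ (k + 1) + 1) := by
    ext n; simp
  rw [h, stern_sum_shift _ _ hle (stern_pow_two k) (stern_pow_two (k + 1)),
    stern_row_sum_Ico k]
end

section
/- For every n ≥ 0, s(n) = s(R(n)), where R(n) is the integer obtained by reversing the binary expansion of n (with R(0)=0), and s is Stern's diatomic sequence. -/
namespace SternRev

def M2 := ℕ × ℕ × ℕ × ℕ

def mmul (P Q : M2) : M2 :=
  (P.1 * Q.1 + P.2.1 * Q.2.2.1, P.1 * Q.2.1 + P.2.1 * Q.2.2.2,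
   P.2.2.1 * Q.1 + P.2.2.2 * Q.2.2.1, P.2.2.1 * Q.2.1 + P.2.2.2 * Q.2.2.2)

def Mb (x : Bool) : M2 := if x then (1,1,0,1) else (1,0,1,1)

def mprod : List Bool → M2
  | [] => (1,0,0,1)
  | x :: t => mmul (Mb x) (mprod t)

def flipM (P : M2) : M2 := (P.2.2.2, P.2.1, P.2.2.1, P.1)

lemma mmul_assoc (P Q R : M2) : mmul (mmul P Q) R = mmul P (mmul Q R) := by
  obtain ⟨a,b,c,d⟩ := P; obtain ⟨e,f,g,h⟩ := Q; obtain ⟨i,j,k,l⟩ := R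
  simp only [mmul]; ring_nf; rfl

lemma flip_mmul (P Q : M2) : flipM (mmul P Q) = mmul (flipM Q) (flipM P) := by
  obtain ⟨a,b,c,d⟩ := P; obtain ⟨e,f,g,h⟩ := Q
  simp only [mmul, flipM]; ring_nf; rfl

lemma flip_Mb (x : Bool) : flipM (Mb x) = Mb x := by cases x <;> rfl

lemma mprod_append (l₁ l₂ : List Bool) :
    mprod (l₁ ++ l₂) = mmul (mprod l₁) (mprod l₂) := by
  induction l₁ with
  | nil =>
      show mprod l₂ = mmul (1,0,0,1) (mprod l₂)
      obtain ⟨a,b,c,d⟩ : ∃ a b c d, mprod l₂ = (a,b,c,d) :=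
        ⟨_, _, _, _, rfl⟩
      simp_all [mmul]; rfl
  | cons x t ih => simp [mprod, ih, mmul_assoc]

lemma mprod_reverse (l : List Bool) : mprod l.reverse = flipM (mprod l) := by
  induction l with
  | nil => rfl
  | cons x t ih =>
      have : mprod [x] = mmul (Mb x) (1,0,0,1) := rfl
      simp only [List.reverse_cons, mprod_append, ih, mprod, flip_mmul, flip_Mb]
      congr 1
      obtain ⟨a,b,c,d⟩ := Mb x
      simp [mmul]; rfl

lemma stern_two_mul (n : ℕ) : stern (2 * n) = stern n := by
  match n with
  | 0 => rfl
  | k + 1 =>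
      have : 2 * (k + 1) = (2 * k) + 2 := by ring
      rw [this, stern]
      simp only [show (2*k+2) % 2 = 0 by omega, if_true]
      congr 1; omega

lemma stern_two_mul_add_one (n : ℕ) : stern (2 * n + 1) = stern n + stern (n + 1) := by
  match n with
  | 0 => norm_num [stern]
  | k + 1 =>
      have : 2 * (k + 1) + 1 = (2 * k + 1) + 2 := by ring
      rw [this, stern]
      simp only [show (2*k+1+2) % 2 ≠ 0 by omega, if_neg, if_false]
      congr 2 <;> omega

lemma stern_ofBits (l : List Bool) :
    stern (ofBits l) = (mprod l).2.1 ∧ stern (ofBits l + 1) = (mprod l).2.2.2 := by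
  induction l with
  | nil => exact ⟨by simp [ofBits, mprod, stern], by simp [ofBits, mprod, stern]⟩
  | cons x t ih =>
      have hb : ofBits (x :: t) = 2 * ofBits t + (if x then 1 else 0) := rfl
      obtain ⟨h1, h2⟩ := ih
      cases x with
      | false =>
          simp only [hb, if_false, Nat.add_zero, Bool.false_eq_true]
          constructor
          · rw [stern_two_mul, h1]; simp [mprod, mmul, Mb, h1]
          · rw [show 2 * ofBits t + 1 = 2 * ofBits t + 1 from rfl, stern_two_mul_add_one]
            simp [mprod, mmul, Mb, h1, h2]
      | true =>
          simp only [hb, if_true]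
          constructor
          · rw [stern_two_mul_add_one]
            simp [mprod, mmul, Mb, h1, h2]
          · rw [show 2 * ofBits t + 1 + 1 = 2 * (ofBits t + 1) by ring, stern_two_mul]
            simp [mprod, mmul, Mb, h2]

lemma ofBits_bits (n : ℕ) : ofBits n.bits = n := by
  induction n using Nat.strong_induction_on with
  | _ n ih =>
      match n, ih with
      | 0, _ => simp [ofBits]
      | (k+1), ih =>
          rcases Nat.even_or_odd (k+1) with ⟨m, hm⟩ | ⟨m, hm⟩
          · have hm2 : k + 1 = 2 * m := by omega
            have hmne : m ≠ 0 := by omega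
            rw [hm2, Nat.bit0_bits m hmne]
            have : ofBits (false :: m.bits) = 2 * ofBits m.bits := by
              simp [ofBits]
            rw [this, ih m (by omega)]
          · rw [hm, Nat.bit1_bits m]
            have : ofBits (true :: m.bits) = 2 * ofBits m.bits + 1 := rfl
            rw [this, ih m (by omega)]

end SternRev

theorem stern_binary_reverse (n : ℕ) : stern n = stern (binRev n) := by
  open SternRev in
  have h1 := (stern_ofBits n.bits).1
  have h2 := (stern_ofBits n.bits.reverse).1
  rw [ofBits_bits] at h1
  rw [binRev, h2, mprod_reverse, h1]
  rfl
end

section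
/- For any binary word w over the alphabet {a,b}, |ψ(w a)| = |ψ(w)| + π(ψ(w a)), i.e., appending a letter to the directive word increases the length of the palindromic closure iterate by exactly the minimal period of the new central word. Equivalently, for a nonempty directive word v = v_1⋯v_n, |ψ(v)| = Σ_{i=1}^n π(ψ(v_1⋯v_i)). -/
open List

def dOf (w : List Bool) : ℕ :=
  Nat.find (p := fun d => (w.drop d).reverse = w.drop d) ⟨w.length, by simp⟩

lemma palClosure_eq (w : List Bool) :
    palClosure w = w ++ (w.take (dOf w)).reverse := rfl

lemma dOf_spec (w : List Bool) : (w.drop (dOf w)).reverse = w.drop (dOf w) := by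
  exact Nat.find_spec (p := fun d => (w.drop d).reverse = w.drop d) ⟨w.length, by simp⟩

lemma dOf_le (w : List Bool) : dOf w ≤ w.length :=
  Nat.find_le (by simp)

lemma dOf_min' {w : List Bool} {m : ℕ} (h : (w.drop m).reverse = w.drop m) :
    dOf w ≤ m := Nat.find_min' _ h

lemma palClosure_length (w : List Bool) :
    (palClosure w).length = w.length + dOf w := by
  simp [palClosure_eq, Nat.min_eq_left (dOf_le w), Nat.add_comm]

lemma palClosure_palindrome (w : List Bool) :
    (palClosure w).reverse = palClosure w := by
  rw [palClosure_eq, reverse_append, reverse_reverse]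
  have h : w.reverse = w.drop (dOf w) ++ (w.take (dOf w)).reverse := by
    conv_lhs => rw [← List.take_append_drop (dOf w) w]
    rw [reverse_append, dOf_spec]
  rw [h, ← List.append_assoc, List.take_append_drop]

lemma prefix_palClosure (w : List Bool) : w <+: palClosure w :=
  ⟨_, rfl⟩

lemma palClosure_min {w q : List Bool} (hq : q.reverse = q) (hp : w <+: q) :
    (palClosure w).length ≤ q.length := by
  obtain ⟨t, rfl⟩ := hp
  rw [palClosure_length, length_append]
  by_cases h : t.length < w.length
  · -- drop t.length w is a palindrome
    have h1 : t.reverse ++ w.reverse = w ++ t := by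
      rw [← reverse_append, hq]
    have h2 : w.reverse = w.drop t.length ++ t := by
      have h6 := congrArg (List.drop t.length) h1
      rwa [show List.drop t.length (t.reverse ++ w.reverse) = w.reverse from by
          rw [← @List.length_reverse _ t]; exact List.drop_left ..,
        List.drop_append_of_le_length h.le] at h6
    have h3 : (w.drop t.length).reverse = w.drop t.length := by
      have hlen : (w.drop t.length).length = w.length - t.length := by simp
      have h4 : (w.reverse).take (w.length - t.length) = w.drop t.length := by
        rw [h2]; exact List.take_left' hlen
      have h5 := congrArg List.reverse h4
      rw [List.reverse_take] at h5
      simp only [List.length_reverse, List.reverse_reverse] at h5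
      rw [show w.length - (w.length - t.length) = t.length by omega] at h5
      exact h5.symm
    have := dOf_min' h3
    omega
  · have := dOf_le w
    omega

lemma psi_nil : psi [] = [] := rfl

lemma psi_append (v : List Bool) (x : Bool) :
    psi (v ++ [x]) = palClosure (psi v ++ [x]) := by
  simp [psi, List.foldl_append]

lemma psi_palindrome (v : List Bool) : (psi v).reverse = psi v := by
  induction v using List.reverseRecOn with
  | nil => rfl
  | append_singleton w x ih => rw [psi_append]; exact palClosure_palindrome _

lemma period_iff (P : List Bool) (p : ℕ) (hp : p ≤ P.length) :
    (∀ i < P.length, i + p < P.length → P[i]? = P[i + p]?) ↔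
      P.take (P.length - p) = P.drop p := by
  constructor
  · intro h
    apply List.ext_getElem?
    intro i
    rw [List.getElem?_take, List.getElem?_drop]
    by_cases hi : i < P.length - p
    · rw [if_pos hi]
      rw [show p + i = i + p by omega]
      exact h i (by omega) (by omega)
    · rw [if_neg hi, eq_comm]
      exact List.getElem?_eq_none (by omega)
  · intro h i hi hip
    have := congrArg (fun l => l[i]?) h
    simp only [List.getElem?_take, List.getElem?_drop] at this
    rw [if_pos (by omega)] at this
    rw [this, Nat.add_comm]

lemma minPeriod_psi_append (w : List Bool) (x : Bool) :
    minPeriod (psi (w ++ [x])) = dOf (psi w ++ [x]) + 1 := by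
  set u := psi w ++ [x] with hu
  set P := palClosure u with hP
  have hpal : P.reverse = P := palClosure_palindrome u
  have hlen : P.length = u.length + dOf u := palClosure_length u
  have hulen : u.length = (psi w).length + 1 := by simp [hu]
  have hpsi : psi (w ++ [x]) = P := psi_append w x
  rw [hpsi]
  rw [minPeriod, Nat.find_eq_iff]
  constructor
  · refine ⟨by omega, ?_⟩
    rw [period_iff P (dOf u + 1) (by omega)]
    have htake : P.take (P.length - (dOf u + 1)) = psi w := by
      have hl : P.length - (dOf u + 1) = (psi w).length := by omega
      rw [hl, hP, palClosure_eq, hu, List.append_assoc]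
      exact List.take_left' rfl
    rw [htake]
    have hdrop : (P.drop (dOf u + 1)).reverse = P.take (P.length - (dOf u + 1)) := by
      rw [List.reverse_drop, hpal]
    rw [← reverse_reverse (P.drop (dOf u + 1)), hdrop, htake, psi_palindrome]
  · intro m hm hpm
    obtain ⟨hm1, hper⟩ := hpm
    rw [period_iff P m (by omega)] at hper
    have hBpal : (P.take (P.length - m)).reverse = P.take (P.length - m) := by
      conv_lhs => rw [hper]
      rw [List.reverse_drop, hpal]
    have huB : u <+: P.take (P.length - m) := by
      have h1 : (P.take (P.length - m)).take u.length = u := by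
        rw [List.take_take, Nat.min_eq_left (by omega), hP, palClosure_eq]
        exact List.take_left' rfl
      exact h1 ▸ List.take_prefix u.length _
    have hle := palClosure_min hBpal huB
    rw [← hP] at hle
    have hBlen : (P.take (P.length - m)).length = P.length - m := by simp
    omega

lemma part1 (w : List Bool) (x : Bool) :
    (psi (w ++ [x])).length = (psi w).length + minPeriod (psi (w ++ [x])) := by
  rw [minPeriod_psi_append, psi_append, palClosure_length]
  simp
  omega

theorem psi_length_via_minimal_periods :
    (∀ (w : List Bool) (x : Bool),
        (psi (w ++ [x])).length = (psi w).length + minPeriod (psi (w ++ [x]))) ∧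
    (∀ v : List Bool, v ≠ [] →
        (psi v).length = ∑ i ∈ Finset.range v.length, minPeriod (psi (v.take (i + 1)))) := by
  refine ⟨part1, ?_⟩
  intro v
  induction v using List.reverseRecOn with
  | nil => intro h; exact absurd rfl h
  | append_singleton w x ih =>
    intro _
    rw [List.length_append, List.length_singleton, Finset.sum_range_succ]
    have hlast : (w ++ [x]).take (w.length + 1) = w ++ [x] := by
      rw [List.take_of_length_le (by simp)]
    rw [hlast]
    have hsum : ∀ i ∈ Finset.range w.length,
        minPeriod (psi ((w ++ [x]).take (i + 1))) = minPeriod (psi (w.take (i + 1))) := by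
      intro i hi
      rw [Finset.mem_range] at hi
      rw [List.take_append_of_le_length (by omega)]
    rw [Finset.sum_congr rfl hsum]
    rcases eq_or_ne w [] with rfl | hw
    · simpa [psi_nil] using part1 [] x
    · rw [← ih hw, part1]
end
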